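/- arXiv:2112.00722 — 7 statements merged into one kernel-verified Lean document; each statement's English description precedes it below -/
import Mathlib

section
/- For positive semidefinite matrices X and Y with X ≈_ε Y (i.e., e^{-ε} Y ⪯ X ⪯ e^{ε} Y, or equivalently the looser multiplicative form (1-ε)I ⪯ X^{†/2} Y X^{†/2} ⪯ (1+ε)I), the difference satisfies (X - Y) X^† (X - Y) ⪯ ε² X. -/
open Matrix

/-- `P` is the Moore–Penrose pseudoinverse of `A`. -/
def IsMoorePenrose {n : Type*} [Fintype n] [DecidableEq n]
    (A P : Matrix n n ℝ) : Prop :=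
  A * P * A = A ∧ P * A * P = P ∧ (A * P)ᵀ = A * P ∧ (P * A)ᵀ = P * A

section Aux

variable {n : Type*} [Fintype n] [DecidableEq n]

/-- Uniqueness of the Moore–Penrose pseudoinverse. -/
lemma pinv_unique {X P Q : Matrix n n ℝ} (hP : IsMoorePenrose X P)
    (hQ : IsMoorePenrose X Q) : P = Q := by
  obtain ⟨hP1, hP2, hP3, hP4⟩ := hP
  obtain ⟨hQ1, hQ2, hQ3, hQ4⟩ := hQ
  have hXP : X * P = X * Q := by
    calc X * P = X * Q * X * P := by rw [hQ1]
    _ = (X * Q) * (X * P) := mul_assoc (X * Q) X P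
    _ = (X * Q)ᵀ * (X * P)ᵀ := by rw [hQ3, hP3]
    _ = ((X * P) * (X * Q))ᵀ := (transpose_mul _ _).symm
    _ = ((X * P * X) * Q)ᵀ := by rw [mul_assoc (X * P) X Q]
    _ = (X * Q)ᵀ := by rw [hP1]
    _ = X * Q := hQ3
  have hPX : P * X = Q * X := by
    calc P * X = P * (X * Q * X) := by rw [hQ1]
    _ = (P * X) * (Q * X) := by
          rw [← mul_assoc P (X * Q) X, ← mul_assoc P X Q, mul_assoc (P * X) Q X]
    _ = (P * X)ᵀ * (Q * X)ᵀ := by rw [hP4, hQ4]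
    _ = ((Q * X) * (P * X))ᵀ := (transpose_mul _ _).symm
    _ = (Q * (X * P * X))ᵀ := by
          rw [← mul_assoc Q (X * P) X, ← mul_assoc Q X P, mul_assoc (Q * X) P X]
    _ = (Q * X)ᵀ := by rw [hP1]
    _ = Q * X := hQ4
  calc P = P * X * P := hP2.symm
  _ = Q * X * Q := by rw [hPX, mul_assoc, hXP, ← mul_assoc]
  _ = Q := hQ2

/-- The pseudoinverse of a symmetric matrix is symmetric. -/
lemma pinv_symm {X P : Matrix n n ℝ} (hXs : Xᵀ = X) (hP : IsMoorePenrose X P) :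
    Pᵀ = P := by
  obtain ⟨h1, h2, h3, h4⟩ := hP
  refine (pinv_unique ?_ ⟨h1, h2, h3, h4⟩)
  have e1 : X * Pᵀ = (P * X)ᵀ := by rw [transpose_mul, hXs]
  have e2 : Pᵀ * X = (X * P)ᵀ := by rw [transpose_mul, hXs]
  refine ⟨?_, ?_, ?_, ?_⟩
  · calc X * Pᵀ * X = (X * (P * X))ᵀ := by
          rw [transpose_mul X (P * X), transpose_mul P X, hXs]
    _ = X := by rw [← mul_assoc, h1, hXs]
  · calc Pᵀ * X * Pᵀ = (P * (X * P))ᵀ := by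
          rw [transpose_mul P (X * P), transpose_mul X P, hXs]
    _ = Pᵀ := by rw [← mul_assoc, h2]
  · rw [e1, transpose_transpose, h4]
  · rw [e2, transpose_transpose, h3]

/-- If `∀ v, X v = 0 → Y v = 0` then `Y * P * X = Y`. -/
lemma ker_absorb {X Y P : Matrix n n ℝ}
    (hker : ∀ v : n → ℝ, X *ᵥ v = 0 → Y *ᵥ v = 0) (hXPX : X * P * X = X) :
    Y * P * X = Y := by
  have key : ∀ v : n → ℝ, (Y * P * X) *ᵥ v = Y *ᵥ v := by
    intro v
    have hx : X *ᵥ ((P * X) *ᵥ v - v) = 0 := by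
      rw [mulVec_sub, mulVec_mulVec, ← mul_assoc, hXPX, sub_self]
    have hy := hker _ hx
    rw [mulVec_sub, mulVec_mulVec, ← mul_assoc, sub_eq_zero] at hy
    exact hy
  ext i j
  have h := congrFun (key (Pi.single j 1)) i
  simpa [mulVec_single] using h

/-- Cauchy–Schwarz for a PSD real matrix. -/
lemma psd_cauchy_schwarz {M : Matrix n n ℝ} (hM : M.PosSemidef) (u v : n → ℝ) :
    (u ⬝ᵥ M *ᵥ v) ^ 2 ≤ (u ⬝ᵥ M *ᵥ u) * (v ⬝ᵥ M *ᵥ v) := by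
  open scoped MatrixOrder in obtain ⟨B, rfl⟩ := CStarAlgebra.nonneg_iff_eq_star_mul_self.mp hM.nonneg
  rw [star_eq_conjTranspose]
  have hBtr : Bᴴ = Bᵀ := conjTranspose_eq_transpose_of_trivial B
  have key : ∀ x y : n → ℝ, x ⬝ᵥ (Bᴴ * B) *ᵥ y = (B *ᵥ x) ⬝ᵥ (B *ᵥ y) := by
    intro x y
    rw [hBtr, ← mulVec_mulVec, dotProduct_mulVec x Bᵀ, vecMul_transpose]
  rw [key u v, key u u, key v v]
  simpa [dotProduct, pow_two] using
    Finset.sum_mul_sq_le_sq_mul_sq Finset.univ (B *ᵥ u) (B *ᵥ v)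

lemma real_isHermitian_iff {M : Matrix n n ℝ} : M.IsHermitian ↔ Mᵀ = M := by
  rw [Matrix.IsHermitian, conjTranspose_eq_transpose_of_trivial]

lemma psd_smul {c : ℝ} {M : Matrix n n ℝ} (hc : 0 ≤ c) (hM : M.PosSemidef) :
    (c • M).PosSemidef := by
  refine PosSemidef.of_dotProduct_mulVec_nonneg ?_ ?_
  · have h := real_isHermitian_iff.mp hM.1
    rw [real_isHermitian_iff, transpose_smul, h]
  · intro x
    rw [smul_mulVec, dotProduct_smul]
    exact mul_nonneg hc (by simpa using hM.dotProduct_mulVec_nonneg x)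

/-- Key step: if `0 ⪯ M ⪯ e • X` (with `M` living on the range of `X`) then
`M * P * M ⪯ e • M` for `P` the pseudoinverse of `X`. -/
lemma key_step {X P M : Matrix n n ℝ} {e : ℝ} (he : 0 ≤ e)
    (hX : X.PosSemidef) (hM : M.PosSemidef) (hPs : Pᵀ = P)
    (hPXP : P * X * P = P) (hXPM : X * P * M = M)
    (hle : (e • X - M).PosSemidef) :
    (e • M - M * P * M).PosSemidef := by
  have hMs : Mᵀ = M := real_isHermitian_iff.mp hM.1
  refine PosSemidef.of_dotProduct_mulVec_nonneg ?_ ?_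
  · rw [real_isHermitian_iff]
    rw [transpose_sub, transpose_smul, hMs, transpose_mul, transpose_mul, hPs, hMs,
      mul_assoc]
  · intro v
    simp only [star_trivial]
    set u : n → ℝ := P *ᵥ (M *ᵥ v) with hu
    set t : ℝ := u ⬝ᵥ M *ᵥ v with ht
    -- v ⬝ᵥ (M*P*M) v = t
    have hMPMv : v ⬝ᵥ (M * P * M) *ᵥ v = t := by
      rw [ht, hu]
      rw [← mulVec_mulVec, ← mulVec_mulVec, dotProduct_mulVec v M,
        ← mulVec_transpose, hMs, dotProduct_mulVec (M *ᵥ v) P, ← mulVec_transpose, hPs]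
    -- X *ᵥ u = M *ᵥ v
    have hXu : X *ᵥ u = M *ᵥ v := by
      rw [hu, mulVec_mulVec, mulVec_mulVec, hXPM]
    -- t = u ⬝ᵥ X *ᵥ u ≥ 0
    have ht0 : 0 ≤ t := by
      have := hX.dotProduct_mulVec_nonneg u
      simpa [star_trivial, hXu, ht] using this
    -- u M u ≤ e * (u X u) = e * t
    have hMu : u ⬝ᵥ M *ᵥ u ≤ e * t := by
      have := hle.dotProduct_mulVec_nonneg u
      simp only [star_trivial, sub_mulVec, dotProduct_sub, smul_mulVec,
        dotProduct_smul, sub_nonneg, smul_eq_mul] at this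
      calc u ⬝ᵥ M *ᵥ u ≤ e * (u ⬝ᵥ X *ᵥ u) := this
      _ = e * t := by rw [hXu, ht]
    have hvMv : 0 ≤ v ⬝ᵥ M *ᵥ v := by simpa using hM.dotProduct_mulVec_nonneg v
    have hMuu : 0 ≤ u ⬝ᵥ M *ᵥ u := by simpa using hM.dotProduct_mulVec_nonneg u
    have hcs := psd_cauchy_schwarz hM u v
    rw [← ht] at hcs
    -- t^2 ≤ (u M u)(v M v) ≤ e t (v M v); conclude t ≤ e (v M v)
    have hfin : t ≤ e * (v ⬝ᵥ M *ᵥ v) := by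
      rcases eq_or_lt_of_le ht0 with h0 | hpos
      · rw [← h0]; positivity
      · have h1 : t * t ≤ (e * (v ⬝ᵥ M *ᵥ v)) * t := by
          calc t * t = t ^ 2 := (sq t).symm
          _ ≤ (u ⬝ᵥ M *ᵥ u) * (v ⬝ᵥ M *ᵥ v) := hcs
          _ ≤ e * t * (v ⬝ᵥ M *ᵥ v) := mul_le_mul_of_nonneg_right hMu hvMv
          _ = (e * (v ⬝ᵥ M *ᵥ v)) * t := by ring
        exact le_of_mul_le_mul_right h1 hpos
    have : v ⬝ᵥ (e • M - M * P * M) *ᵥ v = e * (v ⬝ᵥ M *ᵥ v) - t := by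
      rw [sub_mulVec, dotProduct_sub, smul_mulVec, dotProduct_smul, smul_eq_mul,
        hMPMv]
    rw [this]
    linarith

end Aux

/-- For PSD matrices `X ≈_ε Y` (with the same kernel), we have
`(X - Y) X^† (X - Y) ⪯ ε² X`. -/
theorem spectral_approx_difference {n : Type*} [Fintype n] [DecidableEq n]
    (X Y P : Matrix n n ℝ) (ε : ℝ) (hε0 : 0 < ε) (hε1 : ε < 1)
    (hX : X.PosSemidef) (hY : Y.PosSemidef)
    (hker : ∀ v : n → ℝ, X.mulVec v = 0 ↔ Y.mulVec v = 0)
    (hP : IsMoorePenrose X P)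
    (hlow : (Y - (1 - ε) • X).PosSemidef)
    (hup : ((1 + ε) • X - Y).PosSemidef) :
    (ε ^ 2 • X - (X - Y) * P * (X - Y)).PosSemidef := by
  have hXs : Xᵀ = X := real_isHermitian_iff.mp hX.1
  have hYs : Yᵀ = Y := real_isHermitian_iff.mp hY.1
  have hPs : Pᵀ = P := pinv_symm hXs hP
  obtain ⟨h1, h2, h3, h4⟩ := hP
  -- kernel absorption
  have hYPX : Y * P * X = Y := ker_absorb (fun v hv => (hker v).1 hv) h1
  have hXPY : X * P * Y = Y := by
    have := congrArg transpose hYPX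
    rw [transpose_mul, transpose_mul, hXs, hPs, hYs, ← mul_assoc] at this
    exact this
  -- the two matrices A and B
  set A : Matrix n n ℝ := (1 + ε) • X - Y with hA
  set B : Matrix n n ℝ := Y - (1 - ε) • X with hB
  have hXPA : X * P * A = A := by
    rw [hA, mul_sub, mul_smul_comm, mul_assoc X P X, ← mul_assoc, h1, hXPY]
  have hXPB : X * P * B = B := by
    rw [hB, mul_sub, mul_smul_comm, mul_assoc X P X, ← mul_assoc, h1, hXPY]
  have hleA : ((2 * ε) • X - A).PosSemidef := by
    have : (2 * ε) • X - A = B := by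
      rw [hA, hB]; module
    rw [this]; exact hlow
  have hleB : ((2 * ε) • X - B).PosSemidef := by
    have : (2 * ε) • X - B = A := by
      rw [hA, hB]; module
    rw [this]; exact hup
  have hGA := key_step (by positivity) hX hup hPs h2 hXPA hleA
  have hGB := key_step (by positivity) hX hlow hPs h2 hXPB hleB
  have hsum := hGA.add hGB
  have hiden : ((2 * ε) • A - A * P * A) + ((2 * ε) • B - B * P * B)
      = (2 : ℝ) • (ε ^ 2 • X - (X - Y) * P * (X - Y)) := by
    rw [hA, hB]
    simp only [sub_mul, mul_sub, smul_mul_assoc, mul_smul_comm, mul_assoc]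
    rw [← mul_assoc X P X, ← mul_assoc X P Y, ← mul_assoc Y P X, h1, hXPY, hYPX]
    module
  rw [hiden] at hsum
  have := psd_smul (c := (2:ℝ)⁻¹) (by norm_num) hsum
  rwa [smul_smul, inv_mul_cancel₀ (by norm_num), one_smul] at this
end

section
/- In the rejection sampling scheme: with probability exp(-α) output u + x for x ∼ N(0,σ²Iₙ); otherwise repeatedly sample x ∼ N(0,σ²Iₙ) conditioned on |‖x‖² - ‖x-u+v‖²| ≤ 2σ²α and accept v + x with probability 1 - exp((‖x‖²-‖x-u+v‖²)/(2σ²) - α). Conditioned on the acceptance branch, the accepted output z has density proportional to exp(-‖z-v‖²/(2σ²)) - exp(-‖z-u‖²/(2σ²) - α) on the region {z : |‖z-v‖² - ‖z-u‖²| ≤ 2σ²α}. -/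
open MeasureTheory ProbabilityTheory

open Real Set

lemma pi_gaussian_eq (n : ℕ) (V : NNReal) (hV : V ≠ 0) :
    Measure.pi (fun _ : Fin n => gaussianReal 0 V)
      = (volume : Measure (Fin n → ℝ)).withDensity
          (fun x => ENNReal.ofReal (∏ i, gaussianPDFReal 0 V (x i))) := by
  refine Measure.pi_eq fun s hs => ?_
  rw [withDensity_apply _ (MeasurableSet.univ_pi hs)]
  have hint : Integrable (fun x : Fin n → ℝ => ∏ i, gaussianPDFReal 0 V (x i)) :=
    Integrable.fintype_prod (fun i => integrable_gaussianPDFReal 0 V)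
  rw [← ofReal_integral_eq_lintegral_ofReal hint.restrict
      (ae_of_all _ fun x => Finset.prod_nonneg fun i _ => gaussianPDFReal_nonneg 0 V (x i))]
  have h1 : (∫ x in Set.pi Set.univ s, ∏ i, gaussianPDFReal 0 V (x i))
      = ∫ x : Fin n → ℝ, ∏ i, (s i).indicator (gaussianPDFReal 0 V) (x i) := by
    rw [← integral_indicator (MeasurableSet.univ_pi hs)]
    congr 1
    funext x
    by_cases hx : x ∈ Set.pi Set.univ s
    · rw [Set.indicator_of_mem hx]
      refine Finset.prod_congr rfl fun i _ => ?_
      rw [Set.indicator_of_mem (hx i (Set.mem_univ i))]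
    · rw [Set.indicator_of_notMem hx]
      have : ∃ i, x i ∉ s i := by
        by_contra h
        push_neg at h
        exact hx fun i _ => h i
      obtain ⟨i, hi⟩ := this
      exact (Finset.prod_eq_zero (Finset.mem_univ i)
        (Set.indicator_of_notMem hi _)).symm
  rw [h1, integral_fintype_prod_volume_eq_prod (fun i => (s i).indicator (gaussianPDFReal 0 V)),
    ENNReal.ofReal_prod_of_nonneg]
  · refine Finset.prod_congr rfl fun i _ => ?_
    rw [integral_indicator (hs i), ← gaussianReal_apply_eq_integral 0 hV]
  · intro i _
    rw [integral_indicator (hs i)]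
    exact integral_nonneg fun x => gaussianPDFReal_nonneg 0 V x


lemma map_add_withDensity {n : ℕ} (v : Fin n → ℝ) (f : (Fin n → ℝ) → ENNReal)
    (hf : Measurable f) :
    Measure.map (fun x => v + x) ((volume : Measure (Fin n → ℝ)).withDensity f)
      = volume.withDensity (fun z => f (z - v)) := by
  ext E hE
  rw [Measure.map_apply (measurable_const_add v) hE,
    withDensity_apply _ (hE.preimage (measurable_const_add v)),
    withDensity_apply _ hE]
  have hvol : Measure.map (fun x : Fin n → ℝ => v + x) volume = volume :=
    map_add_left_eq_self volume v
  conv_rhs => rw [← hvol]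
  rw [setLIntegral_map (f := fun z => f (z - v)) hE
    (hf.comp (measurable_id.sub_const v)) (measurable_const_add v)]
  simp


/-- In the rejection-sampling branch, sampling `x ∼ N(0,σ²Iₙ)` conditioned on
`|‖x‖² - ‖x-u+v‖²| ≤ 2σ²α` and accepting `v + x` with probability
`1 - exp((‖x‖²-‖x-u+v‖²)/(2σ²) - α)`, the accepted output `z` has density
proportional to `exp(-‖z-v‖²/(2σ²)) - exp(-‖z-u‖²/(2σ²) - α)` on the region
`{z : |‖z-v‖² - ‖z-u‖²| ≤ 2σ²α}`. -/
theorem rejection_sampling_density (n : ℕ) (u v : Fin n → ℝ) (σ α : ℝ)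
    (hσ : 0 < σ) (hα : 0 < α) :
    ∃ cnorm : ℝ, 0 < cnorm ∧
      Measure.map (fun x => v + x)
        (((Measure.pi fun _ : Fin n => gaussianReal 0 ⟨σ ^ 2, sq_nonneg σ⟩).restrict
            {x : Fin n → ℝ |
              |(∑ i, (x i) ^ 2) - ∑ i, (x i - u i + v i) ^ 2| ≤ 2 * σ ^ 2 * α}).withDensity
          fun x => ENNReal.ofReal
            (1 - Real.exp (((∑ i, (x i) ^ 2) - ∑ i, (x i - u i + v i) ^ 2)
              / (2 * σ ^ 2) - α)))
      = ENNReal.ofReal cnorm •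
        ((volume.restrict {z : Fin n → ℝ |
            |(∑ i, (z i - v i) ^ 2) - ∑ i, (z i - u i) ^ 2| ≤ 2 * σ ^ 2 * α}).withDensity
          fun z => ENNReal.ofReal
            (Real.exp (-(∑ i, (z i - v i) ^ 2) / (2 * σ ^ 2))
              - Real.exp (-(∑ i, (z i - u i) ^ 2) / (2 * σ ^ 2) - α))) := by
  have hσ2 : (0:ℝ) < σ ^ 2 := by positivity
  set V : NNReal := ⟨σ ^ 2, sq_nonneg σ⟩ with hVdef
  have hV : V ≠ 0 := by
    intro h
    exact hσ2.ne' (congrArg NNReal.toReal h)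
  have hVcoe : (V : ℝ) = σ ^ 2 := rfl
  set cnorm : ℝ := ((Real.sqrt (2 * π * σ ^ 2))⁻¹) ^ n with hcdef
  have hsqrt : (0:ℝ) < Real.sqrt (2 * π * σ ^ 2) :=
    Real.sqrt_pos.mpr (by positivity)
  have hc : 0 < cnorm := by positivity
  refine ⟨cnorm, hc, ?_⟩
  set S : Set (Fin n → ℝ) := {x : Fin n → ℝ |
      |(∑ i, (x i) ^ 2) - ∑ i, (x i - u i + v i) ^ 2| ≤ 2 * σ ^ 2 * α} with hSdef
  set T : Set (Fin n → ℝ) := {z : Fin n → ℝ |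
      |(∑ i, (z i - v i) ^ 2) - ∑ i, (z i - u i) ^ 2| ≤ 2 * σ ^ 2 * α} with hTdef
  have hmS : Measurable fun x : Fin n → ℝ =>
      |(∑ i, (x i) ^ 2) - ∑ i, (x i - u i + v i) ^ 2| := by fun_prop
  have hS : MeasurableSet S := measurableSet_le hmS measurable_const
  have hmT : Measurable fun z : Fin n → ℝ =>
      |(∑ i, (z i - v i) ^ 2) - ∑ i, (z i - u i) ^ 2| := by fun_prop
  have hT : MeasurableSet T := measurableSet_le hmT measurable_const
  set G : (Fin n → ℝ) → ENNReal :=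
    fun x => ENNReal.ofReal (∏ i, gaussianPDFReal 0 V (x i)) with hGdef
  set A : (Fin n → ℝ) → ENNReal :=
    fun x => ENNReal.ofReal
      (1 - Real.exp (((∑ i, (x i) ^ 2) - ∑ i, (x i - u i + v i) ^ 2)
        / (2 * σ ^ 2) - α)) with hAdef
  set fD : (Fin n → ℝ) → ENNReal :=
    fun x => ENNReal.ofReal
      (Real.exp (-(∑ i, (x i) ^ 2) / (2 * σ ^ 2))
        - Real.exp (-(∑ i, (x i - u i + v i) ^ 2) / (2 * σ ^ 2) - α)) with hfDdef
  set fT : (Fin n → ℝ) → ENNReal :=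
    fun z => ENNReal.ofReal
      (Real.exp (-(∑ i, (z i - v i) ^ 2) / (2 * σ ^ 2))
        - Real.exp (-(∑ i, (z i - u i) ^ 2) / (2 * σ ^ 2) - α)) with hfTdef
  have hGm : Measurable G := by
    apply Measurable.ennreal_ofReal
    exact Finset.measurable_prod _ fun i _ =>
      (measurable_gaussianPDFReal 0 V).comp (measurable_pi_apply i)
  have hAm : Measurable A := by
    apply Measurable.ennreal_ofReal
    fun_prop
  have hfDm : Measurable fD := by
    apply Measurable.ennreal_ofReal
    fun_prop
  -- product of gaussian densities
  have hP : ∀ x : Fin n → ℝ,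
      (∏ i, gaussianPDFReal 0 V (x i))
        = cnorm * Real.exp (-(∑ i, (x i) ^ 2) / (2 * σ ^ 2)) := by
    intro x
    simp only [gaussianPDFReal, hVcoe, sub_zero]
    rw [Finset.prod_mul_distrib, Finset.prod_const, Finset.card_univ, Fintype.card_fin,
      ← Real.exp_sum]
    congr 1
    rw [← Finset.sum_div]
    congr 1
    simp
  -- pointwise identity for the density
  have hg : ∀ x : Fin n → ℝ, G x * A x = ENNReal.ofReal cnorm * fD x := by
    intro x
    simp only [hGdef, hAdef, hfDdef]
    rw [hP x, ENNReal.ofReal_mul hc.le, mul_assoc]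
    congr 1
    rw [← ENNReal.ofReal_mul (Real.exp_nonneg _)]
    congr 1
    have hexp : Real.exp (-(∑ i, (x i) ^ 2) / (2 * σ ^ 2)) *
        Real.exp (((∑ i, (x i) ^ 2) - ∑ i, (x i - u i + v i) ^ 2) / (2 * σ ^ 2) - α)
        = Real.exp (-(∑ i, (x i - u i + v i) ^ 2) / (2 * σ ^ 2) - α) := by
      rw [← Real.exp_add]
      congr 1
      field_simp
      ring
    rw [mul_sub, mul_one, hexp]
  -- chain of measure equalities
  rw [pi_gaussian_eq n V hV, restrict_withDensity hS,
    ← withDensity_mul _ hGm hAm]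
  have hGA : (G * A) = (ENNReal.ofReal cnorm) • fD := by
    funext x
    simp only [Pi.mul_apply, Pi.smul_apply, smul_eq_mul]
    exact hg x
  rw [hGA, withDensity_smul' _ _ ENNReal.ofReal_ne_top, Measure.map_smul,
    ← withDensity_indicator hS, map_add_withDensity v _ (hfDm.indicator hS)]
  have hkey : (fun z => Set.indicator S fD (z - v)) = Set.indicator T fT := by
    funext z
    have e2 : (∑ i, (z i - v i - u i + v i) ^ 2) = ∑ i, (z i - u i) ^ 2 :=
      Finset.sum_congr rfl fun i _ => by ring
    have hiff : (z - v) ∈ S ↔ z ∈ T := by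
      simp only [hSdef, hTdef, Set.mem_setOf_eq, Pi.sub_apply]
      rw [e2]
    have hval : fD (z - v) = fT z := by
      simp only [hfDdef, hfTdef, Pi.sub_apply]
      rw [e2]
    by_cases hz : z ∈ T
    · rw [Set.indicator_of_mem (hiff.mpr hz), Set.indicator_of_mem hz, hval]
    · rw [Set.indicator_of_notMem (fun h => hz (hiff.mp h)),
        Set.indicator_of_notMem hz]
  rw [hkey, withDensity_indicator hT]
end

section
/- Let ℓ_i < u_i for i ∈ [m], c ∈ ℝ, and let w_ℓ^{(0)}, w_u^{(0)}, w_ℓ^{(1)}, w_u^{(1)} ∈ [7/8, 8/7]^m. For j ∈ {0,1}, let x^{(j)} be the minimizer over x ∈ (max_i ℓ_i, min_i u_i) of c·x - Σ_i w_{ℓ,i}^{(j)} log(x - ℓ_i) - Σ_i w_{u,i}^{(j)} log(u_i - x). Then with r(a) = max{a-3, a^{-1}-3, 0}, Σ_i r((x^{(1)}-ℓ_i)/(x^{(0)}-ℓ_i)) + Σ_i r((u_i-x^{(1)})/(u_i-x^{(0)})) ≤ 16(‖w_ℓ^{(0)}-w_ℓ^{(1)}‖₂² + ‖w_u^{(0)}-w_u^{(1)}‖₂²).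 -/
/-- `r(a) = max{a - 3, a⁻¹ - 3, 0}`. -/
noncomputable def rfun (a : ℝ) : ℝ := max (max (a - 3) (a⁻¹ - 3)) 0

lemma rfun_inv (a : ℝ) : rfun a⁻¹ = rfun a := by
  unfold rfun
  rw [inv_inv, max_comm (a⁻¹ - 3)]

lemma rfun_ratio_le {p δ : ℝ} (hp : 0 < p) (hδ : 0 ≤ δ) :
    rfun ((p + δ) / p) ≤ 3 / 2 * (δ ^ 2 * (p * (p + δ))⁻¹) := by
  have hq : 0 < p + δ := by linarith
  have hR : (0 : ℝ) ≤ 3 / 2 * (δ ^ 2 * (p * (p + δ))⁻¹) := by positivity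
  unfold rfun
  refine max_le (max_le ?_ ?_) hR
  · rcases le_or_gt δ (2 * p) with h | h
    · have h3 : (p + δ) / p ≤ 3 := by rw [div_le_iff₀ hp]; linarith
      linarith
    · have e : (p + δ) / p - 3 = (δ - 2 * p) / p := by field_simp; ring
      have e2 : 3 / 2 * (δ ^ 2 * (p * (p + δ))⁻¹) = 3 * δ ^ 2 / (2 * (p * (p + δ))) := by
        have h1 : p ≠ 0 := hp.ne'
        have h2 : p + δ ≠ 0 := hq.ne'
        field_simp
      rw [e, e2, div_le_div_iff₀ hp (by positivity)]
      nlinarith [mul_pos hp hp, mul_nonneg (mul_nonneg hδ hδ) hp.le,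
        mul_nonneg (mul_nonneg hδ hp.le) hp.le, mul_pos (mul_pos hp hp) hp]
  · have h1 : p / (p + δ) ≤ 1 := by rw [div_le_one hq]; linarith
    rw [inv_div]
    linarith

set_option maxHeartbeats 2000000 in
lemma key_lemma {ι : Type*} [Fintype ι] [Nonempty ι]
    (ℓ u : ι → ℝ) (c : ℝ) (wl0 wu0 wl1 wu1 : ι → ℝ)
    (hwl0 : ∀ i, 7 / 8 ≤ wl0 i) (hwu1 : ∀ i, 7 / 8 ≤ wu1 i)
    (x0 x1 : ℝ)
    (hx0mem : ∀ i, ℓ i < x0 ∧ x0 < u i) (hx1mem : ∀ i, ℓ i < x1 ∧ x1 < u i)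
    (h01 : x0 ≤ x1)
    (hst0 : ∑ i, wl0 i * (x0 - ℓ i)⁻¹ - ∑ i, wu0 i * (u i - x0)⁻¹ = c)
    (hst1 : ∑ i, wl1 i * (x1 - ℓ i)⁻¹ - ∑ i, wu1 i * (u i - x1)⁻¹ = c) :
    (∑ i, rfun ((x1 - ℓ i) / (x0 - ℓ i))) + ∑ i, rfun ((u i - x1) / (u i - x0))
      ≤ 16 * ((∑ i, (wl0 i - wl1 i) ^ 2) + ∑ i, (wu0 i - wu1 i) ^ 2) := by
  have hδ : (0 : ℝ) ≤ x1 - x0 := sub_nonneg.2 h01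
  have hp : ∀ i, 0 < x0 - ℓ i := fun i => sub_pos.2 (hx0mem i).1
  have hq : ∀ i, 0 < x1 - ℓ i := fun i => sub_pos.2 (hx1mem i).1
  have hs : ∀ i, 0 < u i - x0 := fun i => sub_pos.2 (hx0mem i).2
  have ht : ∀ i, 0 < u i - x1 := fun i => sub_pos.2 (hx1mem i).2
  set Hl := ∑ i, ((x0 - ℓ i) * (x1 - ℓ i))⁻¹ with hHl
  set Hu := ∑ i, ((u i - x0) * (u i - x1))⁻¹ with hHu
  set Gl := ∑ i, wl0 i * ((x0 - ℓ i) * (x1 - ℓ i))⁻¹ with hGl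
  set Gu := ∑ i, wu1 i * ((u i - x0) * (u i - x1))⁻¹ with hGu
  set Rl := ∑ i, (wl1 i - wl0 i) * (x1 - ℓ i)⁻¹ with hRl
  set Ru := ∑ i, (wu0 i - wu1 i) * (u i - x0)⁻¹ with hRu
  set D := (∑ i, (wl0 i - wl1 i) ^ 2) + ∑ i, (wu0 i - wu1 i) ^ 2 with hDdef
  clear_value Hl Hu Gl Gu Rl Ru D
  have hD0 : 0 ≤ D := by
    rw [hDdef]
    have a1 : (0:ℝ) ≤ ∑ i, (wl0 i - wl1 i) ^ 2 := Finset.sum_nonneg fun i _ => sq_nonneg _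
    have a2 : (0:ℝ) ≤ ∑ i, (wu0 i - wu1 i) ^ 2 := Finset.sum_nonneg fun i _ => sq_nonneg _
    linarith
  -- balance equation
  have E1 : (x1 - x0) * Gl - Rl
      = ∑ i, (wl0 i * (x0 - ℓ i)⁻¹ - wl1 i * (x1 - ℓ i)⁻¹) := by
    rw [hGl, hRl, Finset.mul_sum, ← Finset.sum_sub_distrib]
    refine Finset.sum_congr rfl fun i _ => ?_
    have h1 := (hp i).ne'
    have h2 := (hq i).ne'
    field_simp
    ring
  have E2 : (x1 - x0) * Gu - Ru
      = ∑ i, (wu1 i * (u i - x1)⁻¹ - wu0 i * (u i - x0)⁻¹) := by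
    rw [hGu, hRu, Finset.mul_sum, ← Finset.sum_sub_distrib]
    refine Finset.sum_congr rfl fun i _ => ?_
    have h1 := (hs i).ne'
    have h2 := (ht i).ne'
    field_simp
    ring
  have E3 : (∑ i, (wl0 i * (x0 - ℓ i)⁻¹ - wl1 i * (x1 - ℓ i)⁻¹))
      + ∑ i, (wu1 i * (u i - x1)⁻¹ - wu0 i * (u i - x0)⁻¹) = 0 := by
    rw [Finset.sum_sub_distrib, Finset.sum_sub_distrib]
    linarith [hst0, hst1]
  have hbal : (x1 - x0) * Gl + (x1 - x0) * Gu = Rl + Ru := by linarith [E1, E2, E3]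
  -- lower bounds on G
  have hGl_ge : 7 / 8 * Hl ≤ Gl := by
    rw [hHl, hGl, Finset.mul_sum]
    exact Finset.sum_le_sum fun i _ =>
      mul_le_mul_of_nonneg_right (hwl0 i) (inv_nonneg.2 (mul_nonneg (hp i).le (hq i).le))
  have hGu_ge : 7 / 8 * Hu ≤ Gu := by
    rw [hHu, hGu, Finset.mul_sum]
    exact Finset.sum_le_sum fun i _ =>
      mul_le_mul_of_nonneg_right (hwu1 i) (inv_nonneg.2 (mul_nonneg (hs i).le (ht i).le))
  have hHl0 : 0 ≤ Hl := hHl ▸ Finset.sum_nonneg fun i _ =>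
    inv_nonneg.2 (mul_nonneg (hp i).le (hq i).le)
  have hHu0 : 0 ≤ Hu := hHu ▸ Finset.sum_nonneg fun i _ =>
    inv_nonneg.2 (mul_nonneg (hs i).le (ht i).le)
  have hH_pos : 0 < Hl + Hu := by
    have h1 : 0 < Hl := hHl ▸ Finset.sum_pos
      (fun i _ => inv_pos.2 (mul_pos (hp i) (hq i))) Finset.univ_nonempty
    linarith
  -- Cauchy–Schwarz
  have hsq : (Rl + Ru) ^ 2 ≤ D * (Hl + Hu) := by
    set F : ι ⊕ ι → ℝ := Sum.elim (fun i => wl1 i - wl0 i) (fun i => wu0 i - wu1 i) with hF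
    set G : ι ⊕ ι → ℝ := Sum.elim (fun i => (x1 - ℓ i)⁻¹) (fun i => (u i - x0)⁻¹) with hG
    have hcs := Finset.sum_mul_sq_le_sq_mul_sq Finset.univ F G
    have hFG : ∑ j, F j * G j = Rl + Ru := by
      rw [Fintype.sum_sum_type]
      simp [hF, hG, hRl, hRu]
    have hF2 : ∑ j, F j ^ 2 = D := by
      rw [Fintype.sum_sum_type]
      simp only [hF, Sum.elim_inl, Sum.elim_inr, hDdef]
      congr 1
      exact Finset.sum_congr rfl fun i _ => by ring
    have hG2 : ∑ j, G j ^ 2 ≤ Hl + Hu := by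
      rw [Fintype.sum_sum_type, hHl, hHu]
      refine add_le_add (Finset.sum_le_sum fun i _ => ?_) (Finset.sum_le_sum fun i _ => ?_)
      · simp only [hG, Sum.elim_inl]
        rw [sq, ← mul_inv]
        exact inv_anti₀ (mul_pos (hp i) (hq i))
          (mul_le_mul_of_nonneg_right (by linarith [hp i, hq i]) (hq i).le)
      · simp only [hG, Sum.elim_inr]
        rw [sq, ← mul_inv]
        exact inv_anti₀ (mul_pos (hs i) (ht i))
          (mul_le_mul_of_nonneg_left (by linarith [hs i, ht i]) (hs i).le)
    calc (Rl + Ru) ^ 2 = (∑ j, F j * G j) ^ 2 := by rw [hFG]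
      _ ≤ (∑ j, F j ^ 2) * ∑ j, G j ^ 2 := hcs
      _ = D * ∑ j, G j ^ 2 := by rw [hF2]
      _ ≤ D * (Hl + Hu) := mul_le_mul_of_nonneg_left hG2 hD0
  -- combine
  have h1 : 7 / 8 * ((x1 - x0) * (Hl + Hu)) ≤ Rl + Ru := by
    have a1 := mul_le_mul_of_nonneg_left hGl_ge hδ
    have a2 := mul_le_mul_of_nonneg_left hGu_ge hδ
    nlinarith [hbal]
  have hR0 : 0 ≤ Rl + Ru := by
    have a1 := mul_nonneg hδ (le_trans (by linarith) hGl_ge)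
    have a2 := mul_nonneg hδ (le_trans (by linarith) hGu_ge)
    linarith [hbal]
  have hmain : (x1 - x0) ^ 2 * (Hl + Hu) ≤ 64 / 49 * D := by
    have h2 : (7 / 8 * ((x1 - x0) * (Hl + Hu))) ^ 2 ≤ (Rl + Ru) ^ 2 :=
      pow_le_pow_left₀ (by positivity) h1 2
    have h4 : (x1 - x0) ^ 2 * (Hl + Hu) * (Hl + Hu) ≤ 64 / 49 * D * (Hl + Hu) := by
      nlinarith [h2, hsq]
    exact le_of_mul_le_mul_right h4 hH_pos
  -- per-term bounds
  have hbound_l : ∀ i, rfun ((x1 - ℓ i) / (x0 - ℓ i))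
      ≤ 3 / 2 * ((x1 - x0) ^ 2 * ((x0 - ℓ i) * (x1 - ℓ i))⁻¹) := by
    intro i
    have h := rfun_ratio_le (hp i) hδ
    simpa [show x0 - ℓ i + (x1 - x0) = x1 - ℓ i from by ring] using h
  have hbound_u : ∀ i, rfun ((u i - x1) / (u i - x0))
      ≤ 3 / 2 * ((x1 - x0) ^ 2 * ((u i - x0) * (u i - x1))⁻¹) := by
    intro i
    have e : rfun ((u i - x1) / (u i - x0)) = rfun ((u i - x0) / (u i - x1)) := by
      rw [← rfun_inv ((u i - x0) / (u i - x1)), inv_div]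
    have e2 : u i - x1 + (x1 - x0) = u i - x0 := by ring
    rw [e]
    calc rfun ((u i - x0) / (u i - x1))
        = rfun ((u i - x1 + (x1 - x0)) / (u i - x1)) := by rw [e2]
      _ ≤ 3 / 2 * ((x1 - x0) ^ 2 * ((u i - x1) * (u i - x1 + (x1 - x0)))⁻¹) :=
          rfun_ratio_le (ht i) hδ
      _ = 3 / 2 * ((x1 - x0) ^ 2 * ((u i - x0) * (u i - x1))⁻¹) := by
          rw [e2, mul_comm (u i - x1)]
  calc (∑ i, rfun ((x1 - ℓ i) / (x0 - ℓ i))) + ∑ i, rfun ((u i - x1) / (u i - x0))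
      ≤ (∑ i, 3 / 2 * ((x1 - x0) ^ 2 * ((x0 - ℓ i) * (x1 - ℓ i))⁻¹))
        + ∑ i, 3 / 2 * ((x1 - x0) ^ 2 * ((u i - x0) * (u i - x1))⁻¹) :=
        add_le_add (Finset.sum_le_sum fun i _ => hbound_l i)
          (Finset.sum_le_sum fun i _ => hbound_u i)
    _ = 3 / 2 * ((x1 - x0) ^ 2 * (Hl + Hu)) := by
        rw [hHl, hHu, mul_add, mul_add, Finset.mul_sum, Finset.mul_sum,
          Finset.mul_sum, Finset.mul_sum]
    _ ≤ 3 / 2 * (64 / 49 * D) := by linarith [hmain]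
    _ ≤ 16 * D := by linarith

set_option maxHeartbeats 1000000 in
lemma stationary_eq {ι : Type*} [Fintype ι]
    (ℓ u : ι → ℝ) (c : ℝ) (wl wu : ι → ℝ) (x : ℝ)
    (hx : ∀ i, ℓ i < x ∧ x < u i)
    (hmin : ∀ y : ℝ, (∀ i, ℓ i < y ∧ y < u i) →
      c * x - (∑ i, wl i * Real.log (x - ℓ i)) - (∑ i, wu i * Real.log (u i - x))
        ≤ c * y - (∑ i, wl i * Real.log (y - ℓ i)) - (∑ i, wu i * Real.log (u i - y))) :
    ∑ i, wl i * (x - ℓ i)⁻¹ - ∑ i, wu i * (u i - x)⁻¹ = c := by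
  set f : ℝ → ℝ := fun y =>
    c * y - (∑ i, wl i * Real.log (y - ℓ i)) - (∑ i, wu i * Real.log (u i - y)) with hf
  have hopen : IsOpen {y : ℝ | ∀ i, ℓ i < y ∧ y < u i} := by
    have e : {y : ℝ | ∀ i, ℓ i < y ∧ y < u i} = ⋂ i, Set.Ioo (ℓ i) (u i) := by
      ext y; simp [Set.mem_iInter, Set.mem_Ioo]
    rw [e]
    exact isOpen_iInter_of_finite fun i => isOpen_Ioo
  have hmemx : x ∈ {y : ℝ | ∀ i, ℓ i < y ∧ y < u i} := hx
  have hloc : IsLocalMin f x := by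
    show ∀ᶠ y in nhds x, f x ≤ f y
    filter_upwards [hopen.mem_nhds hmemx] with y hy using hmin y hy
  have hc : HasDerivAt (fun y : ℝ => c * y) c x := by
    simpa using (hasDerivAt_id x).const_mul c
  have hA : HasDerivAt (fun y => ∑ i, wl i * Real.log (y - ℓ i))
      (∑ i, wl i * (x - ℓ i)⁻¹) x := by
    refine HasDerivAt.fun_sum fun i _ => ?_
    have h1 : HasDerivAt (fun y : ℝ => y - ℓ i) 1 x := (hasDerivAt_id x).sub_const _
    have h2 : HasDerivAt (fun y : ℝ => Real.log (y - ℓ i)) ((x - ℓ i)⁻¹) x := by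
      simpa [Function.comp_def] using (Real.hasDerivAt_log (sub_ne_zero.2 (hx i).1.ne')).comp x h1
    simpa using h2.const_mul (wl i)
  have hB : HasDerivAt (fun y => ∑ i, wu i * Real.log (u i - y))
      (∑ i, -(wu i * (u i - x)⁻¹)) x := by
    refine HasDerivAt.fun_sum fun i _ => ?_
    have h1 : HasDerivAt (fun y : ℝ => u i - y) (-1) x := (hasDerivAt_id x).const_sub (u i)
    have h2 : HasDerivAt (fun y : ℝ => Real.log (u i - y)) ((u i - x)⁻¹ * (-1)) x := by
      simpa [Function.comp_def] using (Real.hasDerivAt_log (sub_ne_zero.2 (hx i).2.ne')).comp x h1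
    have h3 := h2.const_mul (wu i)
    rw [show -(wu i * (u i - x)⁻¹) = wu i * ((u i - x)⁻¹ * -1) by ring]
    exact h3
  have hderiv : HasDerivAt f
      (c - ∑ i, wl i * (x - ℓ i)⁻¹ - ∑ i, -(wu i * (u i - x)⁻¹)) x :=
    (hc.sub hA).sub hB
  have h0 := hloc.deriv_eq_zero
  rw [hderiv.deriv] at h0
  rw [Finset.sum_neg_distrib] at h0
  linarith

set_option maxHeartbeats 1000000 in
/-- One-dimensional weighted log-barrier stability: if `x⁽⁰⁾, x⁽¹⁾` minimize the
weighted log-barrier objectives with weights in `[7/8, 8/7]`, then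
`Σᵢ r((x⁽¹⁾-ℓᵢ)/(x⁽⁰⁾-ℓᵢ)) + Σᵢ r((uᵢ-x⁽¹⁾)/(uᵢ-x⁽⁰⁾))
  ≤ 16(‖wℓ⁽⁰⁾-wℓ⁽¹⁾‖₂² + ‖wᵤ⁽⁰⁾-wᵤ⁽¹⁾‖₂²)`. -/
theorem log_barrier_1d_stability {ι : Type*} [Fintype ι] [Nonempty ι]
    (ℓ u : ι → ℝ) (hlu : ∀ i, ℓ i < u i) (c : ℝ)
    (wl0 wu0 wl1 wu1 : ι → ℝ)
    (hwl0 : ∀ i, wl0 i ∈ Set.Icc (7 / 8 : ℝ) (8 / 7))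
    (hwu0 : ∀ i, wu0 i ∈ Set.Icc (7 / 8 : ℝ) (8 / 7))
    (hwl1 : ∀ i, wl1 i ∈ Set.Icc (7 / 8 : ℝ) (8 / 7))
    (hwu1 : ∀ i, wu1 i ∈ Set.Icc (7 / 8 : ℝ) (8 / 7))
    (x0 x1 : ℝ)
    (hx0mem : ∀ i, ℓ i < x0 ∧ x0 < u i) (hx1mem : ∀ i, ℓ i < x1 ∧ x1 < u i)
    (hx0min : ∀ y : ℝ, (∀ i, ℓ i < y ∧ y < u i) →
      c * x0 - (∑ i, wl0 i * Real.log (x0 - ℓ i))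
          - (∑ i, wu0 i * Real.log (u i - x0))
        ≤ c * y - (∑ i, wl0 i * Real.log (y - ℓ i))
          - (∑ i, wu0 i * Real.log (u i - y)))
    (hx1min : ∀ y : ℝ, (∀ i, ℓ i < y ∧ y < u i) →
      c * x1 - (∑ i, wl1 i * Real.log (x1 - ℓ i))
          - (∑ i, wu1 i * Real.log (u i - x1))
        ≤ c * y - (∑ i, wl1 i * Real.log (y - ℓ i))
          - (∑ i, wu1 i * Real.log (u i - y))) :
    (∑ i, rfun ((x1 - ℓ i) / (x0 - ℓ i))) + ∑ i, rfun ((u i - x1) / (u i - x0))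
      ≤ 16 * ((∑ i, (wl0 i - wl1 i) ^ 2) + ∑ i, (wu0 i - wu1 i) ^ 2) := by
  have hst0 := stationary_eq ℓ u c wl0 wu0 x0 hx0mem hx0min
  have hst1 := stationary_eq ℓ u c wl1 wu1 x1 hx1mem hx1min
  rcases le_total x0 x1 with h | h
  · exact key_lemma ℓ u c wl0 wu0 wl1 wu1 (fun i => (hwl0 i).1) (fun i => (hwu1 i).1)
      x0 x1 hx0mem hx1mem h hst0 hst1
  · have hkey := key_lemma ℓ u c wl1 wu1 wl0 wu0 (fun i => (hwl1 i).1) (fun i => (hwu0 i).1)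
      x1 x0 hx1mem hx0mem h hst1 hst0
    have e1 : ∑ i, rfun ((x1 - ℓ i) / (x0 - ℓ i)) = ∑ i, rfun ((x0 - ℓ i) / (x1 - ℓ i)) :=
      Finset.sum_congr rfl fun i _ => by
        rw [← rfun_inv ((x0 - ℓ i) / (x1 - ℓ i)), inv_div]
    have e2 : ∑ i, rfun ((u i - x1) / (u i - x0)) = ∑ i, rfun ((u i - x0) / (u i - x1)) :=
      Finset.sum_congr rfl fun i _ => by
        rw [← rfun_inv ((u i - x0) / (u i - x1)), inv_div]
    have e3 : ∑ i, (wl0 i - wl1 i) ^ 2 = ∑ i, (wl1 i - wl0 i) ^ 2 :=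
      Finset.sum_congr rfl fun i _ => by ring
    have e4 : ∑ i, (wu0 i - wu1 i) ^ 2 = ∑ i, (wu1 i - wu0 i) ^ 2 :=
      Finset.sum_congr rfl fun i _ => by ring
    rw [e1, e2, e3, e4]
    exact hkey
end

section
/- In the one-dimensional weighted log-barrier setting with x^{(0)} < x^{(1)}, setting α_i = (x^{(1)}-x^{(0)})/(x^{(1)}-ℓ_i) ∈ (0,1), the following lower bound holds: (x^{(1)}-x^{(0)}) · Σ_i (w_{ℓ,i}^{(0)}/(x^{(0)}-ℓ_i) - w_{ℓ,i}^{(1)}/(x^{(1)}-ℓ_i)) ≥ -2 Σ_i (w_{ℓ,i}^{(0)} - w_{ℓ,i}^{(1)})² + (1/8) Σ_{i: α_i ≥ 2/3} 1/(1-α_i), provided w_{ℓ,i}^{(1)} ≥ 7/8 for all i. -/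
lemma key_term (a u v : ℝ) (ha0 : 0 < a) (ha1 : a < 1)
    (hu : 7/8 ≤ u) (hu' : u ≤ 8/7) (hv : 7/8 ≤ v) (hv' : v ≤ 8/7) :
    -2*(u-v)^2 + 1/8 * (if (2:ℝ)/3 ≤ a then 1/(1-a) else 0) ≤ a*u/(1-a) - a*v := by
  have h1a : 0 < 1 - a := by linarith
  split_ifs with h
  · rw [← sub_nonneg]
    have e : a*u/(1-a) - a*v - (-2*(u-v)^2 + 1/8 * (1/(1-a)))
        = (a*u - a*v*(1-a) + 2*(u-v)^2*(1-a) - 1/8)/(1-a) := by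
      field_simp; ring
    rw [e]
    apply div_nonneg _ h1a.le
    nlinarith [mul_nonneg (by linarith : (0:ℝ) ≤ a - 2/3) h1a.le, sq_nonneg (u-v),
      mul_nonneg (sq_nonneg (u-v)) h1a.le, mul_nonneg (by linarith : (0:ℝ) ≤ a - 2/3) (by linarith : (0:ℝ) ≤ 8/7 - v)]
  · rw [← sub_nonneg]
    have e : a*u/(1-a) - a*v - (-2*(u-v)^2 + 1/8 * 0)
        = (a*u - a*v*(1-a) + 2*(u-v)^2*(1-a))/(1-a) := by
      field_simp; ring
    rw [e]
    apply div_nonneg _ h1a.le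
    by_cases hc : 8*(v-u) ≤ 7*a
    · nlinarith [mul_nonneg (sq_nonneg (u-v)) h1a.le,
        mul_nonneg ha0.le (by linarith : (0:ℝ) ≤ 7*a - 8*(v-u)),
        mul_nonneg ha0.le (by linarith : (0:ℝ) ≤ v - 7/8)]
    · push_neg at hc
      have hd : v - u ≤ 15/56 := by linarith
      have hd0 : 0 < v - u := by nlinarith
      nlinarith [mul_pos hd0 (by linarith : 0 < 8*(v-u) - 7*a),
        mul_nonneg (mul_nonneg ha0.le ha0.le) (by linarith : (0:ℝ) ≤ v),
        mul_nonneg (mul_nonneg hd0.le hd0.le) (by linarith : (0:ℝ) ≤ 15/56 - (v-u))]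


/-- Lower bound in the one-dimensional weighted log-barrier setting: with
`αᵢ = (x⁽¹⁾-x⁽⁰⁾)/(x⁽¹⁾-ℓᵢ)`,
`(x⁽¹⁾-x⁽⁰⁾)·Σᵢ (wℓᵢ⁽⁰⁾/(x⁽⁰⁾-ℓᵢ) - wℓᵢ⁽¹⁾/(x⁽¹⁾-ℓᵢ))
  ≥ -2 Σᵢ (wℓᵢ⁽⁰⁾-wℓᵢ⁽¹⁾)² + (1/8) Σ_{i: αᵢ ≥ 2/3} 1/(1-αᵢ)`. -/
theorem log_barrier_lower_bound {ι : Type*} [Fintype ι]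
    (ℓ : ι → ℝ) (x0 x1 : ℝ) (hx : x0 < x1) (hℓ : ∀ i, ℓ i < x0)
    (w0 w1 : ι → ℝ)
    (hw0 : ∀ i, w0 i ∈ Set.Icc (7 / 8 : ℝ) (8 / 7))
    (hw1 : ∀ i, w1 i ∈ Set.Icc (7 / 8 : ℝ) (8 / 7)) :
    -2 * (∑ i, (w0 i - w1 i) ^ 2)
        + (1 / 8) * ∑ i ∈ Finset.univ.filter
            (fun i => (2 : ℝ) / 3 ≤ (x1 - x0) / (x1 - ℓ i)),
            1 / (1 - (x1 - x0) / (x1 - ℓ i))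
      ≤ (x1 - x0) * ∑ i, (w0 i / (x0 - ℓ i) - w1 i / (x1 - ℓ i)) := by
  rw [Finset.sum_filter, Finset.mul_sum, Finset.mul_sum, Finset.mul_sum,
    ← Finset.sum_add_distrib]
  apply Finset.sum_le_sum
  intro i _
  have h0 : (0:ℝ) < x0 - ℓ i := by linarith [hℓ i]
  have h1 : (0:ℝ) < x1 - ℓ i := by linarith [hℓ i]
  set a : ℝ := (x1 - x0) / (x1 - ℓ i) with ha
  have ha0 : 0 < a := div_pos (by linarith) h1
  have ha1 : a < 1 := by
    rw [ha, div_lt_one h1]; linarith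
  have h1a : 0 < 1 - a := by linarith
  have e : (x1 - x0) * (w0 i / (x0 - ℓ i) - w1 i / (x1 - ℓ i))
      = a * (w0 i) / (1 - a) - a * (w1 i) := by
    have e2 : 1 - a = (x0 - ℓ i) / (x1 - ℓ i) := by
      rw [ha]; field_simp; ring
    rw [ha, e2]
    field_simp
  rw [e]
  have := key_term a (w0 i) (w1 i) ha0 ha1 (hw0 i).1 (hw0 i).2 (hw1 i).1 (hw1 i).2
  split_ifs at this ⊢ with h
  · linarith [this]
  · linarith [this]
end

section
/- Let φ_i(x) = -log(u_i - x) - log(x - ℓ_i) be the two-sided log barrier. If x^{(0)}, x^{(1)} ∈ (ℓ_i, u_i), then φ_i''(x^{(0)}) ≤ max{(x^{(1)}-ℓ_i)/(x^{(0)}-ℓ_i), (u_i-x^{(1)})/(u_i-x^{(0)})}² · φ_i''(x^{(1)}). -/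
/-- For the two-sided log barrier `φ(x) = -log(u-x) - log(x-ℓ)` with
`φ''(x) = 1/(u-x)² + 1/(x-ℓ)²`, for `x⁽⁰⁾, x⁽¹⁾ ∈ (ℓ, u)`:
`φ''(x⁽⁰⁾) ≤ max{(x⁽¹⁾-ℓ)/(x⁽⁰⁾-ℓ), (u-x⁽¹⁾)/(u-x⁽⁰⁾)}² · φ''(x⁽¹⁾)`. -/
theorem barrier_hessian_ratio (ℓ u x0 x1 : ℝ) (hlu : ℓ < u)
    (hx0 : x0 ∈ Set.Ioo ℓ u) (hx1 : x1 ∈ Set.Ioo ℓ u) :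
    1 / (u - x0) ^ 2 + 1 / (x0 - ℓ) ^ 2
      ≤ (max ((x1 - ℓ) / (x0 - ℓ)) ((u - x1) / (u - x0))) ^ 2
        * (1 / (u - x1) ^ 2 + 1 / (x1 - ℓ) ^ 2) := by
  obtain ⟨h0l, h0u⟩ := hx0
  obtain ⟨h1l, h1u⟩ := hx1
  have a0 : (0:ℝ) < x0 - ℓ := by linarith
  have b0 : (0:ℝ) < u - x0 := by linarith
  have a1 : (0:ℝ) < x1 - ℓ := by linarith
  have b1 : (0:ℝ) < u - x1 := by linarith
  set M := max ((x1 - ℓ) / (x0 - ℓ)) ((u - x1) / (u - x0)) with hM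
  have hr1 : (0:ℝ) < (x1 - ℓ) / (x0 - ℓ) := by positivity
  have hr2 : (0:ℝ) < (u - x1) / (u - x0) := by positivity
  have h1 : 1 / (u - x0) ^ 2 ≤ M ^ 2 * (1 / (u - x1) ^ 2) := by
    have : ((u - x1) / (u - x0)) ^ 2 * (1 / (u - x1) ^ 2) = 1 / (u - x0) ^ 2 := by
      field_simp
    calc 1 / (u - x0) ^ 2 = ((u - x1) / (u - x0)) ^ 2 * (1 / (u - x1) ^ 2) := this.symm
      _ ≤ M ^ 2 * (1 / (u - x1) ^ 2) := by
          apply mul_le_mul_of_nonneg_right _ (by positivity)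
          exact pow_le_pow_left₀ hr2.le (le_max_right _ _) 2
  have h2 : 1 / (x0 - ℓ) ^ 2 ≤ M ^ 2 * (1 / (x1 - ℓ) ^ 2) := by
    have : ((x1 - ℓ) / (x0 - ℓ)) ^ 2 * (1 / (x1 - ℓ) ^ 2) = 1 / (x0 - ℓ) ^ 2 := by
      field_simp
    calc 1 / (x0 - ℓ) ^ 2 = ((x1 - ℓ) / (x0 - ℓ)) ^ 2 * (1 / (x1 - ℓ) ^ 2) := this.symm
      _ ≤ M ^ 2 * (1 / (x1 - ℓ) ^ 2) := by
          apply mul_le_mul_of_nonneg_right _ (by positivity)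
          exact pow_le_pow_left₀ hr1.le (le_max_left _ _) 2
  calc 1 / (u - x0) ^ 2 + 1 / (x0 - ℓ) ^ 2
      ≤ M ^ 2 * (1 / (u - x1) ^ 2) + M ^ 2 * (1 / (x1 - ℓ) ^ 2) := add_le_add h1 h2
    _ = M ^ 2 * (1 / (u - x1) ^ 2 + 1 / (x1 - ℓ) ^ 2) := by ring
end

section
/- Let x' ∈ ℝ^m satisfy ‖x' - x*‖_{W^{-1}} ≤ ε/2 where B^⊤ x* = d, and define x̃ = x' + W B (B^⊤ W B)^† (d - B^⊤ x'). Then B^⊤ x̃ = d and ‖x̃ - x'‖_{W^{-1}} ≤ ε/2, hence ‖x̃ - x*‖_{W^{-1}} ≤ ε. -/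
open Matrix

/-- Uniqueness of the Moore–Penrose pseudoinverse. -/
lemma mp_unique {n : Type*} [Fintype n] [DecidableEq n]
    (A P Q : Matrix n n ℝ) (hP : IsMoorePenrose A P) (hQ : IsMoorePenrose A Q) :
    P = Q := by
  obtain ⟨h1, h2, h3, h4⟩ := hP
  obtain ⟨k1, k2, k3, k4⟩ := hQ
  have hAP : A * P = A * Q := by
    calc A * P = (A * P)ᵀ := h3.symm
      _ = Pᵀ * Aᵀ := by rw [transpose_mul]
      _ = Pᵀ * (A * Q * A)ᵀ := by rw [k1]
      _ = Pᵀ * (Aᵀ * (A * Q)ᵀ) := by rw [transpose_mul]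
      _ = (Pᵀ * Aᵀ) * (A * Q) := by rw [k3, Matrix.mul_assoc]
      _ = (A * P)ᵀ * (A * Q) := by rw [transpose_mul]
      _ = (A * P) * (A * Q) := by rw [h3]
      _ = (A * P * A) * Q := by simp only [Matrix.mul_assoc]
      _ = A * Q := by rw [h1]
  have hPA : P * A = Q * A := by
    calc P * A = (P * A)ᵀ := h4.symm
      _ = Aᵀ * Pᵀ := by rw [transpose_mul]
      _ = (A * Q * A)ᵀ * Pᵀ := by rw [k1]
      _ = ((Q * A)ᵀ * Aᵀ) * Pᵀ := by simp only [transpose_mul, Matrix.mul_assoc]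
      _ = (Q * A) * (Aᵀ * Pᵀ) := by rw [k4, Matrix.mul_assoc]
      _ = (Q * A) * (P * A)ᵀ := by rw [transpose_mul]
      _ = (Q * A) * (P * A) := by rw [h4]
      _ = Q * (A * P * A) := by simp only [Matrix.mul_assoc]
      _ = Q * A := by rw [h1]
  calc P = P * A * P := h2.symm
    _ = P * (A * Q) := by rw [Matrix.mul_assoc, hAP]
    _ = (Q * A) * Q := by rw [← Matrix.mul_assoc, hPA]
    _ = Q := k2

/-- A symmetric idempotent matrix is a contraction in the Euclidean norm. -/
lemma proj_bound {m : ℕ} (M : Matrix (Fin m) (Fin m) ℝ)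
    (hMT : Mᵀ = M) (hMM : M * M = M) (u : Fin m → ℝ) :
    ∑ i, (M.mulVec u i) ^ 2 ≤ ∑ i, u i ^ 2 := by
  have symm : ∀ (N : Matrix (Fin m) (Fin m) ℝ), Nᵀ = N →
      ∀ a b : Fin m → ℝ, (N.mulVec a) ⬝ᵥ b = a ⬝ᵥ (N.mulVec b) := by
    intro N hN a b
    rw [dotProduct_comm, dotProduct_mulVec, ← mulVec_transpose, hN, dotProduct_comm]
  have h1 : ∑ i, (M.mulVec u i) ^ 2 = u ⬝ᵥ M.mulVec u := by
    have : (M.mulVec u) ⬝ᵥ (M.mulVec u) = u ⬝ᵥ M.mulVec (M.mulVec u) := symm M hMT _ _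
    rw [mulVec_mulVec, hMM] at this
    simpa [dotProduct, sq] using this
  set N : Matrix (Fin m) (Fin m) ℝ := 1 - M with hNdef
  have hNT : Nᵀ = N := by simp [hNdef, transpose_sub, hMT]
  have hNN : N * N = N := by
    simp only [hNdef, Matrix.sub_mul, Matrix.mul_sub, Matrix.one_mul, Matrix.mul_one, hMM]
    abel
  have h2 : 0 ≤ u ⬝ᵥ N.mulVec u := by
    have e : (N.mulVec u) ⬝ᵥ (N.mulVec u) = u ⬝ᵥ N.mulVec u := by
      rw [symm N hNT, mulVec_mulVec, hNN]
    rw [← e]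
    exact Finset.sum_nonneg fun i _ => mul_self_nonneg _
  have h3 : u ⬝ᵥ N.mulVec u = ∑ i, u i ^ 2 - u ⬝ᵥ M.mulVec u := by
    simp only [hNdef, sub_mulVec, one_mulVec, dotProduct, sq, Pi.sub_apply, mul_sub]
    rw [Finset.sum_sub_distrib]
  rw [h1]; linarith [h2, h3.symm.trans_le (le_of_eq rfl)] 

lemma sqrt_sum_sq_triangle {m : ℕ} (a b : Fin m → ℝ) :
    Real.sqrt (∑ i, (a i + b i) ^ 2) ≤
      Real.sqrt (∑ i, a i ^ 2) + Real.sqrt (∑ i, b i ^ 2) := by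
  let f : EuclideanSpace ℝ (Fin m) := (WithLp.equiv 2 (Fin m → ℝ)).symm a
  let g : EuclideanSpace ℝ (Fin m) := (WithLp.equiv 2 (Fin m → ℝ)).symm b
  have h := norm_add_le f g
  simp only [EuclideanSpace.norm_eq, Real.norm_eq_abs, sq_abs, f, g,
    WithLp.equiv_symm_apply, PiLp.toLp_apply, PiLp.add_apply] at h
  exact h

/-- Feasibility correction: if `‖x' - x*‖_{W⁻¹} ≤ ε/2` with `Bᵀ x* = d`, then
`x̃ = x' + W B (BᵀWB)^† (d - Bᵀ x')` satisfies `Bᵀ x̃ = d`,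
`‖x̃ - x'‖_{W⁻¹} ≤ ε/2` and `‖x̃ - x*‖_{W⁻¹} ≤ ε`. -/
theorem feasibility_correction {m n : ℕ}
    (B : Matrix (Fin m) (Fin n) ℝ)
    (hB : ∀ e : Fin m, ∃ a b : Fin n, a ≠ b ∧
      B e = fun v => (if v = a then (1 : ℝ) else 0) - (if v = b then 1 else 0))
    (w : Fin m → ℝ) (hw : ∀ i, 0 < w i)
    (P : Matrix (Fin n) (Fin n) ℝ)
    (hP : IsMoorePenrose (Bᵀ * Matrix.diagonal w * B) P)
    (x' xstar : Fin m → ℝ) (d : Fin n → ℝ)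
    (hfeas : Bᵀ.mulVec xstar = d) (ε : ℝ)
    (herr : Real.sqrt (∑ i, (x' i - xstar i) ^ 2 / w i) ≤ ε / 2) :
    let xt := x' + (Matrix.diagonal w * B * P).mulVec (d - Bᵀ.mulVec x')
    Bᵀ.mulVec xt = d ∧
      Real.sqrt (∑ i, (xt i - x' i) ^ 2 / w i) ≤ ε / 2 ∧
      Real.sqrt (∑ i, (xt i - xstar i) ^ 2 / w i) ≤ ε := by
  intro xt
  have hxt_def : xt = x' + (Matrix.diagonal w * B * P).mulVec (d - Bᵀ.mulVec x') := rfl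
  set A : Matrix (Fin n) (Fin n) ℝ := Bᵀ * Matrix.diagonal w * B with hA
  obtain ⟨h1, h2, h3, h4⟩ := hP
  have hAT : Aᵀ = A := by
    rw [hA]; simp [transpose_mul, Matrix.mul_assoc]
  have hPT : Pᵀ = P := by
    have hQ : IsMoorePenrose A Pᵀ := by
      refine ⟨?_, ?_, ?_, ?_⟩
      · calc A * Pᵀ * A = (Aᵀ * P * Aᵀ)ᵀ := by simp only [transpose_mul, transpose_transpose, Matrix.mul_assoc]
          _ = (A * P * A)ᵀ := by rw [hAT]
          _ = Aᵀ := by rw [h1]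
          _ = A := hAT
      · calc Pᵀ * A * Pᵀ = (Pᵀ * Aᵀ) * Pᵀ := by rw [hAT]
          _ = (P * A * P)ᵀ := by simp only [transpose_mul, Matrix.mul_assoc]
          _ = Pᵀ := by rw [h2]
      · calc (A * Pᵀ)ᵀ = P * Aᵀ := by simp only [transpose_mul, transpose_transpose]
          _ = P * A := by rw [hAT]
          _ = (P * A)ᵀ := h4.symm
          _ = Aᵀ * Pᵀ := by simp only [transpose_mul]
          _ = A * Pᵀ := by rw [hAT]
      · calc (Pᵀ * A)ᵀ = Aᵀ * P := by simp only [transpose_mul, transpose_transpose]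
          _ = A * P := by rw [hAT]
          _ = (A * P)ᵀ := h3.symm
          _ = Pᵀ * Aᵀ := by simp only [transpose_mul]
          _ = Pᵀ * A := by rw [hAT]
    exact mp_unique A Pᵀ P hQ ⟨h1, h2, h3, h4⟩
  -- Part 1 preliminary: A * P * Bᵀ = Bᵀ
  set C : Matrix (Fin n) (Fin m) ℝ := Bᵀ - A * P * Bᵀ with hC
  have hCDB : C * Matrix.diagonal w * B = 0 := by
    have e : C * Matrix.diagonal w * B = A - A * P * A := by
      rw [hC, Matrix.sub_mul, Matrix.sub_mul, hA]
      simp only [Matrix.mul_assoc]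
    rw [e, h1, sub_self]
  have hCT : Cᵀ = B - B * (P * A) := by
    rw [hC]
    simp only [transpose_sub, transpose_mul, transpose_transpose, hPT, hAT, Matrix.mul_assoc]
  have key : C * Matrix.diagonal w * Cᵀ = 0 := by
    rw [hCT, Matrix.mul_sub, hCDB, ← Matrix.mul_assoc, hCDB]
    simp
  have hC0 : C = 0 := by
    ext j i
    have hdiag : (C * Matrix.diagonal w * Cᵀ) j j = ∑ k, C j k * w k * C j k := by
      rw [Matrix.mul_apply]
      apply Finset.sum_congr rfl
      intro k _
      rw [Matrix.mul_diagonal, transpose_apply]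
    have hz0 : ∑ k, C j k * w k * C j k = 0 := by rw [← hdiag, key]; simp
    have hnn : ∀ k ∈ Finset.univ, (0:ℝ) ≤ C j k * w k * C j k := by
      intro k _
      have := (hw k).le
      nlinarith [sq_nonneg (C j k)]
    have hterm := (Finset.sum_eq_zero_iff_of_nonneg hnn).mp hz0 i (Finset.mem_univ i)
    have h2' : C j i * C j i * w i = 0 := by linarith [hterm, (by ring : C j i * w i * C j i = C j i * C j i * w i)]
    have h3' : C j i * C j i = 0 := (mul_eq_zero.mp h2').resolve_right (hw i).ne'
    simpa using mul_self_eq_zero.mp h3'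
  have hAPB : A * P * Bᵀ = Bᵀ := by
    have e : Bᵀ - A * P * Bᵀ = 0 := by rw [← hC]; exact hC0
    exact (sub_eq_zero.mp e).symm
  -- Part 1
  set z : Fin m → ℝ := xstar - x' with hzdef
  have hd : d - Bᵀ.mulVec x' = Bᵀ.mulVec z := by
    rw [hzdef, mulVec_sub, hfeas]
  have part1 : Bᵀ.mulVec xt = d := by
    rw [hxt_def, mulVec_add, hd, mulVec_mulVec, mulVec_mulVec]
    have e1 : Bᵀ * (Matrix.diagonal w * B * P) * Bᵀ = A * P * Bᵀ := by
      rw [hA]; simp only [Matrix.mul_assoc]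
    rw [e1, hAPB, ← mulVec_add, hzdef, add_sub_cancel, hfeas]
  -- Part 2
  set s : Fin m → ℝ := fun i => Real.sqrt (w i) with hs
  have hs0 : ∀ i, s i ≠ 0 := fun i => (Real.sqrt_pos.mpr (hw i)).ne'
  have hss : ∀ i, s i * s i = w i := fun i => Real.mul_self_sqrt (hw i).le
  have hsq : ∀ i, s i ^ 2 = w i := fun i => Real.sq_sqrt (hw i).le
  set M : Matrix (Fin m) (Fin m) ℝ :=
    Matrix.diagonal s * (B * (P * Bᵀ)) * Matrix.diagonal s with hM
  have hMT : Mᵀ = M := by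
    rw [hM]
    simp only [transpose_mul, transpose_transpose, diagonal_transpose, hPT, Matrix.mul_assoc]
  have hdd : Matrix.diagonal s * Matrix.diagonal s = Matrix.diagonal w := by
    rw [diagonal_mul_diagonal]; exact congrArg Matrix.diagonal (funext hss)
  have assoc3 : ∀ Y : Matrix (Fin n) (Fin m) ℝ,
      Bᵀ * (Matrix.diagonal w * (B * Y)) = A * Y := by
    intro Y; rw [hA]; simp only [Matrix.mul_assoc]
  have hPAP : ∀ Z : Matrix (Fin n) (Fin m) ℝ, P * (A * (P * Z)) = P * Z := by
    intro Z
    calc P * (A * (P * Z)) = (P * A * P) * Z := by simp only [Matrix.mul_assoc]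
      _ = P * Z := by rw [h2]
  have hMM : M * M = M := by
    rw [hM]
    simp only [Matrix.mul_assoc]
    rw [← Matrix.mul_assoc (Matrix.diagonal s) (Matrix.diagonal s), hdd, assoc3, hPAP]
  set u : Fin m → ℝ := fun i => z i / s i with hu
  have hvec : (Matrix.diagonal s).mulVec u = z := by
    funext i
    rw [mulVec_diagonal]
    simp only [hu]
    rw [mul_comm]; exact div_mul_cancel₀ _ (hs0 i)
  have hxtv : xt - x' = (Matrix.diagonal w).mulVec ((B * (P * Bᵀ)).mulVec z) := by
    rw [hxt_def, hd, add_sub_cancel_left, mulVec_mulVec, mulVec_mulVec]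
    congr 1
    simp only [Matrix.mul_assoc]
  have hMu : M.mulVec u = fun i => s i * ((B * (P * Bᵀ)).mulVec z) i := by
    rw [hM, ← mulVec_mulVec, hvec, ← mulVec_mulVec]
    funext i
    rw [mulVec_diagonal]
  have hsum2 : ∑ i, (xt i - x' i) ^ 2 / w i = ∑ i, (M.mulVec u i) ^ 2 := by
    apply Finset.sum_congr rfl
    intro i _
    have e1 : xt i - x' i = w i * ((B * (P * Bᵀ)).mulVec z) i := by
      have := congrFun hxtv i
      simpa [mulVec_diagonal] using this
    rw [e1, hMu]
    rw [← hss i, div_eq_iff (mul_ne_zero (hs0 i) (hs0 i))]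
    ring
  have hsumu : ∑ i, u i ^ 2 = ∑ i, (x' i - xstar i) ^ 2 / w i := by
    apply Finset.sum_congr rfl
    intro i _
    have e1 : u i = (xstar i - x' i) / s i := by simp [hu, hzdef]
    rw [e1, div_pow, hsq i, show (xstar i - x' i) ^ 2 = (x' i - xstar i) ^ 2 from by ring]
  have hb : ∑ i, (xt i - x' i) ^ 2 / w i ≤ ∑ i, (x' i - xstar i) ^ 2 / w i := by
    rw [hsum2, ← hsumu]
    exact proj_bound M hMT hMM u
  have part2 : Real.sqrt (∑ i, (xt i - x' i) ^ 2 / w i) ≤ ε / 2 :=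
    le_trans (Real.sqrt_le_sqrt hb) herr
  -- Part 3
  have e1 : ∀ (c : ℝ) (i : Fin m), (c / s i) ^ 2 = c ^ 2 / w i := by
    intro c i; rw [div_pow, hsq i]
  have s1 : ∑ i, ((xt i - x' i) / s i) ^ 2 = ∑ i, (xt i - x' i) ^ 2 / w i :=
    Finset.sum_congr rfl fun i _ => e1 _ i
  have s2 : ∑ i, ((x' i - xstar i) / s i) ^ 2 = ∑ i, (x' i - xstar i) ^ 2 / w i :=
    Finset.sum_congr rfl fun i _ => e1 _ i
  have s3 : ∑ i, ((xt i - x' i) / s i + (x' i - xstar i) / s i) ^ 2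
      = ∑ i, (xt i - xstar i) ^ 2 / w i := by
    apply Finset.sum_congr rfl
    intro i _
    rw [← add_div,
      show xt i - x' i + (x' i - xstar i) = xt i - xstar i from by ring, e1]
  have tri := sqrt_sum_sq_triangle (fun i => (xt i - x' i) / s i)
    (fun i => (x' i - xstar i) / s i)
  rw [s3, s1, s2] at tri
  have part3 : Real.sqrt (∑ i, (xt i - xstar i) ^ 2 / w i) ≤ ε := by
    calc Real.sqrt (∑ i, (xt i - xstar i) ^ 2 / w i)
        ≤ Real.sqrt (∑ i, (xt i - x' i) ^ 2 / w i)
          + Real.sqrt (∑ i, (x' i - xstar i) ^ 2 / w i) := tri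
      _ ≤ ε / 2 + ε / 2 := add_le_add part2 herr
      _ = ε := by ring
  exact ⟨part1, part2, part3⟩
end

section
/- Let SC₁ and SC₂ be symmetric PSD matrices with the same kernel satisfying SC₂ ≈_ε SC₁ (i.e., e^{-ε} SC₁ ⪯ SC₂ ⪯ e^{ε} SC₁) for ε ≤ 1/2. Then for any vector b in the image, ‖(SC₁^† - SC₂^†) b‖_{SC₁} ≤ 2ε ‖b‖_{SC₁^†}, and also ‖SC₂^† b‖_{SC₁} ≤ 2 ‖b‖_{SC₁^†}. -/
open Matrix

private lemma matext {n : Type*} [Fintype n] [DecidableEq n] (M : Matrix n n ℝ)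
    (h : ∀ v, M.mulVec v = 0) : M = 0 := by
  ext i j
  have h1 := congrFun (h (Pi.single j 1)) i
  simpa using h1

private lemma herm_symm {n : Type*} [Fintype n] {A : Matrix n n ℝ} (hA : A.IsHermitian)
    (a b : n → ℝ) : a ⬝ᵥ A.mulVec b = b ⬝ᵥ A.mulVec a := by
  have hAt : Aᵀ = A := by
    ext i j
    simpa using congrFun (congrFun hA i) j
  rw [Matrix.dotProduct_mulVec, ← Matrix.mulVec_transpose, hAt, dotProduct_comm]

private lemma form_expand {n : Type*} [Fintype n] (A : Matrix n n ℝ)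
    (hA : ∀ a b, a ⬝ᵥ A.mulVec b = b ⬝ᵥ A.mulVec a) (s σ : ℝ) (u v : n → ℝ) :
    (s • u + σ • v) ⬝ᵥ A.mulVec (s • u + σ • v)
      = s^2*(u ⬝ᵥ A.mulVec u) + 2*s*σ*(u ⬝ᵥ A.mulVec v) + σ^2*(v ⬝ᵥ A.mulVec v) := by
  rw [Matrix.mulVec_add, Matrix.mulVec_smul, Matrix.mulVec_smul]
  rw [add_dotProduct, smul_dotProduct, smul_dotProduct]
  simp only [dotProduct_add, dotProduct_smul, smul_eq_mul]
  rw [hA v u]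
  ring

private lemma polar' {n : Type*} [Fintype n] (S M : Matrix n n ℝ) (c : ℝ) (hc : 0 ≤ c)
    (hS : ∀ a b, a ⬝ᵥ S.mulVec b = b ⬝ᵥ S.mulVec a)
    (hM : ∀ a b, a ⬝ᵥ M.mulVec b = b ⬝ᵥ M.mulVec a)
    (hSnn : ∀ w, 0 ≤ w ⬝ᵥ S.mulVec w)
    (hup : ∀ w, w ⬝ᵥ M.mulVec w ≤ c * (w ⬝ᵥ S.mulVec w))
    (hlow : ∀ w, -(c * (w ⬝ᵥ S.mulVec w)) ≤ w ⬝ᵥ M.mulVec w)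
    (t : ℝ) (u v : n → ℝ) :
    2 * t * (u ⬝ᵥ M.mulVec v)
      ≤ t^2 * (u ⬝ᵥ S.mulVec u) + c^2 * (v ⬝ᵥ S.mulVec v) := by
  rcases hc.lt_or_eq with hcpos | hczero
  · have e1 := hup (t • u + c • v)
    have e2 := hlow (t • u + (-c) • v)
    rw [form_expand M hM t c u v, form_expand S hS t c u v] at e1
    rw [form_expand M hM t (-c) u v, form_expand S hS t (-c) u v] at e2
    nlinarith [e1, e2, hcpos, sq_nonneg t, hSnn u, hSnn v]
  · have hMzero : ∀ w, w ⬝ᵥ M.mulVec w = 0 := fun w => by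
      have h1 := hup w
      have h2 := hlow w
      rw [← hczero] at h1 h2
      simp at h1 h2
      linarith
    have e1 := hMzero (t • u + (1:ℝ) • v)
    rw [form_expand M hM t 1 u v] at e1
    have e2 := hMzero u
    have e3 := hMzero v
    rw [← hczero]
    nlinarith [sq_nonneg t, mul_nonneg (sq_nonneg t) (hSnn u), hSnn u, hSnn v]

private lemma exp_upper {ε : ℝ} (hε0 : 0 ≤ ε) (hε : ε ≤ 1/2) :
    Real.exp ε ≤ 1 + ε + ε^2 := by
  have h3 : (1 - ε/3) * Real.exp (ε/3) ≤ 1 := by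
    have h := Real.add_one_le_exp (-(ε/3))
    have hprod : Real.exp (-(ε/3)) * Real.exp (ε/3) = 1 := by
      rw [← Real.exp_add]; simp
    nlinarith [Real.exp_pos (ε/3)]
  have hpos : (0:ℝ) < 1 - ε/3 := by linarith
  have hx3 : Real.exp ε = (Real.exp (ε/3))^3 := by
    rw [← Real.exp_nat_mul]
    congr 1
    push_cast
    ring
  have hcube : ((1 - ε/3) * Real.exp (ε/3))^3 ≤ 1 := by
    have hnn : 0 ≤ (1 - ε/3) * Real.exp (ε/3) := by positivity
    calc ((1 - ε/3) * Real.exp (ε/3))^3 ≤ 1^3 := pow_le_pow_left₀ hnn h3 3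
    _ = 1 := one_pow 3
  have hexpand : (1 - ε/3)^3 * Real.exp ε ≤ 1 := by
    rw [hx3]; nlinarith [hcube]
  have h9 : 0 ≤ 9 - 19*ε + 8*ε^2 - ε^3 := by nlinarith [sq_nonneg ε, mul_nonneg hε0 hε0]
  have hpoly : 1 ≤ (1 + ε + ε^2) * (1 - ε/3)^3 := by
    have hfact : (1 + ε + ε^2) * (1 - ε/3)^3 = 1 + ε^2/27 * (9 - 19*ε + 8*ε^2 - ε^3) := by
      ring
    nlinarith [mul_nonneg (sq_nonneg ε) h9]
  have hp3 : 0 < (1 - ε/3)^3 := by positivity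
  nlinarith [mul_le_mul_of_nonneg_right hexpand (le_of_lt hp3), Real.exp_pos ε]

private lemma final_poly {ε x : ℝ} (hε0 : 0 ≤ ε) (hε : ε ≤ 1/2)
    (hxl : 1 + ε ≤ x) (hxu : x ≤ 1 + ε + ε^2) :
    x * (x-1)^2 * (1 - 4*ε^2) ≤ 4 * ε^2 * (2 - x) := by
  have h1 : 0 ≤ 1 - 4*ε^2 := by nlinarith
  have hc : x - 1 ≤ ε + ε^2 := by linarith
  have hc0 : 0 ≤ x - 1 := by linarith
  have hup : x * (x-1)^2 ≤ (1 + ε + ε^2) * (ε + ε^2)^2 := by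
    have h2 : (x-1)^2 ≤ (ε + ε^2)^2 := by nlinarith
    nlinarith [sq_nonneg (x-1), sq_nonneg (ε + ε^2)]
  have h2x : 1 - ε - ε^2 ≤ 2 - x := by linarith
  have hquint : (1 + ε + ε^2) * (1+ε)^2 * (1 - 4*ε^2) ≤ 4 * (1 - ε - ε^2) := by
    nlinarith [sq_nonneg (ε - 2/5), mul_nonneg hε0 hε0, sq_nonneg ε,
      mul_nonneg (mul_nonneg hε0 hε0) hε0,
      mul_nonneg (mul_nonneg (mul_nonneg hε0 hε0) hε0) hε0,
      mul_nonneg (mul_nonneg (mul_nonneg (mul_nonneg hε0 hε0) hε0) hε0) hε0,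
      mul_nonneg (sq_nonneg (ε - 2/5)) hε0, mul_nonneg (sq_nonneg (ε - 2/5)) (sq_nonneg ε),
      mul_nonneg (mul_nonneg (sq_nonneg (ε-2/5)) hε0) hε0]
  have key : (1 + ε + ε^2) * (ε + ε^2)^2 * (1 - 4*ε^2) ≤ 4 * ε^2 * (1 - ε - ε^2) := by
    have hfact : (1 + ε + ε^2) * (ε + ε^2)^2 * (1 - 4*ε^2)
        = ε^2 * ((1 + ε + ε^2) * (1+ε)^2 * (1 - 4*ε^2)) := by ring
    rw [hfact]
    have := mul_le_mul_of_nonneg_left hquint (sq_nonneg ε)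
    linarith
  nlinarith [mul_le_mul_of_nonneg_right hup h1, sq_nonneg ε, mul_nonneg hε0 hε0]

set_option maxHeartbeats 800000 in
/-- If `SC₂ ≈_ε SC₁` (i.e. `e^{-ε}SC₁ ⪯ SC₂ ⪯ e^{ε}SC₁`) with equal kernels and
`ε ≤ 1/2`, then for `b` in the image, `‖(SC₁^† - SC₂^†)b‖_{SC₁} ≤ 2ε‖b‖_{SC₁^†}`
and `‖SC₂^† b‖_{SC₁} ≤ 2‖b‖_{SC₁^†}`. -/
theorem spectral_approx_solve_error {n : Type*} [Fintype n] [DecidableEq n]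
    (SC1 SC2 P1 P2 : Matrix n n ℝ) (ε : ℝ) (hε0 : 0 ≤ ε) (hε : ε ≤ 1 / 2)
    (h1 : SC1.PosSemidef) (h2 : SC2.PosSemidef)
    (hker : ∀ v : n → ℝ, SC1.mulVec v = 0 ↔ SC2.mulVec v = 0)
    (hlow : (SC2 - Real.exp (-ε) • SC1).PosSemidef)
    (hup : (Real.exp ε • SC1 - SC2).PosSemidef)
    (hP1 : IsMoorePenrose SC1 P1) (hP2 : IsMoorePenrose SC2 P2)
    (b : n → ℝ) (hb : ∃ z, SC1.mulVec z = b) :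
    Real.sqrt (((P1 - P2).mulVec b) ⬝ᵥ SC1.mulVec ((P1 - P2).mulVec b))
        ≤ 2 * ε * Real.sqrt (b ⬝ᵥ P1.mulVec b) ∧
      Real.sqrt ((P2.mulVec b) ⬝ᵥ SC1.mulVec (P2.mulVec b))
        ≤ 2 * Real.sqrt (b ⬝ᵥ P1.mulVec b) := by
  obtain ⟨z, hz⟩ := hb
  set x := Real.exp ε with hxdef
  set y := Real.exp (-ε) with hydef
  have hxy : y * x = 1 := by rw [hydef, hxdef, ← Real.exp_add]; simp
  have hxpos : (0:ℝ) < x := Real.exp_pos ε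
  have hypos : (0:ℝ) < y := Real.exp_pos _
  have hxl : 1 + ε ≤ x := by have := Real.add_one_le_exp ε; linarith
  have hxu : x ≤ 1 + ε + ε^2 := exp_upper hε0 hε
  have hx74 : x ≤ 7/4 := by nlinarith
  have hxy2 : 2 ≤ x + y := by nlinarith [sq_nonneg (x-1)]
  -- symmetry and positivity of forms
  have hsw : ∀ w : n → ℝ, star w = w := fun w => funext fun i => by simp
  have hS := herm_symm h1.1
  have hT := herm_symm h2.1
  have hSt : SC1ᵀ = SC1 := by ext i j; simpa using congrFun (congrFun h1.1 i) j
  have hTt : SC2ᵀ = SC2 := by ext i j; simpa using congrFun (congrFun h2.1 i) j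
  have hSform : ∀ w, 0 ≤ w ⬝ᵥ SC1.mulVec w := fun w => by
    have := h1.dotProduct_mulVec_nonneg w; rwa [hsw] at this
  have hTlow : ∀ w, y * (w ⬝ᵥ SC1.mulVec w) ≤ w ⬝ᵥ SC2.mulVec w := fun w => by
    have h := hlow.dotProduct_mulVec_nonneg w
    rw [hsw, Matrix.sub_mulVec, Matrix.smul_mulVec, dotProduct_sub,
      dotProduct_smul, smul_eq_mul] at h
    linarith
  have hTup : ∀ w, w ⬝ᵥ SC2.mulVec w ≤ x * (w ⬝ᵥ SC1.mulVec w) := fun w => by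
    have h := hup.dotProduct_mulVec_nonneg w
    rw [hsw, Matrix.sub_mulVec, Matrix.smul_mulVec, dotProduct_sub,
      dotProduct_smul, smul_eq_mul] at h
    linarith
  -- matrix identities
  have hP2T : SC2 * P2ᵀ * SC2 = SC2 := by
    have h' := congrArg Matrix.transpose hP2.1
    rw [Matrix.transpose_mul, Matrix.transpose_mul, hTt] at h'
    rw [mul_assoc]
    exact h'
  have hSPS : SC1 * (1 - P2ᵀ * SC2) = 0 := by
    apply matext
    intro v
    rw [← Matrix.mulVec_mulVec]
    apply (hker _).mpr
    rw [Matrix.mulVec_mulVec]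
    have hzero : SC2 * (1 - P2ᵀ * SC2) = 0 := by
      rw [mul_sub, mul_one, ← mul_assoc, hP2T, sub_self]
    rw [hzero, Matrix.zero_mulVec]
  have hS2 : SC1 = SC1 * (P2ᵀ * SC2) := by
    have h' := hSPS
    rw [mul_sub, mul_one, sub_eq_zero] at h'
    exact h'
  have hTPS : SC2 * P2 * SC1 = SC1 := by
    have h' := congrArg Matrix.transpose hS2
    rw [hSt, Matrix.transpose_mul, Matrix.transpose_mul, Matrix.transpose_transpose,
      hSt, hTt] at h'
    exact h'.symm
  set x1 := P1.mulVec b with hx1def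
  set x2 := P2.mulVec b with hx2def
  set d := x1 - x2 with hddef
  have hSx1 : SC1.mulVec x1 = b := by
    rw [hx1def, ← hz, Matrix.mulVec_mulVec, Matrix.mulVec_mulVec, hP1.1]
  have hTx2 : SC2.mulVec x2 = b := by
    rw [hx2def, ← hz, Matrix.mulVec_mulVec, Matrix.mulVec_mulVec, hTPS]
  set Dsq := d ⬝ᵥ SC1.mulVec d with hDsqdef
  set gsq := x2 ⬝ᵥ SC1.mulVec x2 with hgsqdef
  set bsq := x1 ⬝ᵥ SC1.mulVec x1 with hbsqdef
  set p := x2 ⬝ᵥ b with hpdef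
  have hDnn : 0 ≤ Dsq := hSform d
  have hgnn : 0 ≤ gsq := hSform x2
  have hbnn : 0 ≤ bsq := hSform x1
  have hbeq : b ⬝ᵥ P1.mulVec b = bsq := by
    rw [hbsqdef, hSx1, dotProduct_comm]
  have e1 : x1 ⬝ᵥ SC1.mulVec x2 = p := by rw [hS x1 x2, hSx1]
  have e2 : x2 ⬝ᵥ SC1.mulVec x1 = p := by rw [hSx1]
  have hIdD : Dsq = bsq - 2*p + gsq := by
    rw [hDsqdef, hddef, Matrix.mulVec_sub, dotProduct_sub, sub_dotProduct, sub_dotProduct,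
      e1, e2]
    ring
  have hDM : d ⬝ᵥ (SC2 - SC1).mulVec x2 = Dsq := by
    rw [Matrix.sub_mulVec, dotProduct_sub, hTx2, hDsqdef]
    have hd2 : SC1.mulVec d = b - SC1.mulVec x2 := by
      rw [hddef, Matrix.mulVec_sub, hSx1]
    rw [hd2, dotProduct_sub]
  have hgp : y * gsq ≤ p := by
    have h := hTlow x2
    rw [hTx2] at h
    exact h
  have hgxp : gsq ≤ x * p := by
    have hm := mul_le_mul_of_nonneg_left hgp (le_of_lt hxpos)
    have hxyg : x*(y*gsq) = gsq := by
      rw [show x*(y*gsq) = (y*x)*gsq from by ring, hxy, one_mul]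
    linarith [hm, hxyg]
  have h2g : (2 - x)*gsq + x*Dsq ≤ x*bsq := by
    have hp2 : 2*p = bsq + gsq - Dsq := by linarith
    have hxx : x*(2*p) = x*bsq + x*gsq - x*Dsq := by rw [hp2]; ring
    have hxp2 : x*(2*p) = 2*(x*p) := by ring
    linarith [hgxp, hxx, hxp2]
  -- polar inequalities
  have hMsym : ∀ a b', a ⬝ᵥ (SC2 - SC1).mulVec b' = b' ⬝ᵥ (SC2 - SC1).mulVec a := by
    intro a b'
    rw [Matrix.sub_mulVec, Matrix.sub_mulVec, dotProduct_sub, dotProduct_sub,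
      hT a b', hS a b']
  have hupM : ∀ w, w ⬝ᵥ (SC2 - SC1).mulVec w ≤ (x-1) * (w ⬝ᵥ SC1.mulVec w) := by
    intro w
    rw [Matrix.sub_mulVec, dotProduct_sub]
    have := hTup w
    linarith
  have hlowM : ∀ w, -((x-1) * (w ⬝ᵥ SC1.mulVec w)) ≤ w ⬝ᵥ (SC2 - SC1).mulVec w := by
    intro w
    rw [Matrix.sub_mulVec, dotProduct_sub]
    have h1' := hTlow w
    have h2' := mul_nonneg (by linarith : (0:ℝ) ≤ x + y - 2) (hSform w)
    linarith
  have hc0 : (0:ℝ) ≤ x - 1 := by linarith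
  have hKB1 : Dsq ≤ (x-1)^2 * gsq := by
    have h := polar' SC1 (SC2 - SC1) (x-1) hc0 hS hMsym hSform hupM hlowM 1 d x2
    rw [hDM] at h
    linarith [h]
  have hKB2 : 2*x*p ≤ x^2*bsq + gsq := by
    have h := polar' SC1 SC1 1 (by norm_num) hS hS hSform
      (fun w => by rw [one_mul]) (fun w => by have := hSform w; linarith) x x1 x2
    rw [e1] at h
    linarith [h]
  -- goal 1 scalar chain
  have hfin := final_poly hε0 hε hxl hxu
  have t1 : (2-x)*Dsq ≤ (2-x)*((x-1)^2*gsq) :=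
    mul_le_mul_of_nonneg_left hKB1 (by linarith)
  have t2 : (x-1)^2*((2-x)*gsq + x*Dsq) ≤ (x-1)^2*(x*bsq) :=
    mul_le_mul_of_nonneg_left h2g (sq_nonneg _)
  have t3 : ((2-x) + x*(x-1)^2) * Dsq ≤ x*(x-1)^2*bsq := by nlinarith [t1, t2]
  have t4 : x*(x-1)^2*bsq - 4*ε^2*(x*(x-1)^2)*bsq ≤ (4*ε^2*(2-x))*bsq := by
    have := mul_le_mul_of_nonneg_right hfin hbnn
    linarith [this]
  have hKpos : (0:ℝ) < (2-x) + x*(x-1)^2 := by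
    have : 0 ≤ x*(x-1)^2 := mul_nonneg (by linarith) (sq_nonneg _)
    linarith
  have hKD : ((2-x) + x*(x-1)^2) * Dsq ≤ ((2-x) + x*(x-1)^2) * (4*ε^2*bsq) := by
    nlinarith [t3, t4]
  have hmain : Dsq ≤ 4*ε^2*bsq := le_of_mul_le_mul_left hKD hKpos
  constructor
  · have hsq : Real.sqrt Dsq ≤ Real.sqrt (4*ε^2*bsq) := Real.sqrt_le_sqrt hmain
    have heq : Real.sqrt (4*ε^2*bsq) = 2*ε*Real.sqrt bsq := by
      rw [show (4*ε^2*bsq) = (2*ε)^2*bsq by ring, Real.sqrt_mul (sq_nonneg _),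
        Real.sqrt_sq (by linarith : (0:ℝ) ≤ 2*ε)]
    rw [hbeq]
    calc Real.sqrt ((P1 - P2).mulVec b ⬝ᵥ SC1.mulVec ((P1 - P2).mulVec b))
        = Real.sqrt Dsq := by rw [hDsqdef, hddef, hx1def, hx2def, Matrix.sub_mulVec]
      _ ≤ 2*ε*Real.sqrt bsq := heq ▸ hsq
  · have hg4 : gsq ≤ 4*bsq := by
      have hx2b : gsq ≤ x^2*bsq := by linarith [hgxp, hKB2]
      have hx2sq : x^2 ≤ 4 := by nlinarith
      have := mul_le_mul_of_nonneg_right hx2sq hbnn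
      linarith
    have hsq : Real.sqrt gsq ≤ Real.sqrt (4*bsq) := Real.sqrt_le_sqrt hg4
    have heq : Real.sqrt (4*bsq) = 2*Real.sqrt bsq := by
      rw [show (4*bsq) = 2^2*bsq by ring, Real.sqrt_mul (by norm_num : (0:ℝ) ≤ (2:ℝ)^2),
        Real.sqrt_sq (by norm_num : (0:ℝ) ≤ (2:ℝ))]
    rw [hbeq]
    calc Real.sqrt (P2.mulVec b ⬝ᵥ SC1.mulVec (P2.mulVec b))
        = Real.sqrt gsq := by rw [hgsqdef, hx2def]
      _ ≤ 2*Real.sqrt bsq := heq ▸ hsq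
end
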